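/- arXiv:math/0309306 — 5 statements merged into one kernel-verified Lean document; each statement's English description precedes it below -/
import Mathlib

section
/- Let ζ ∈ ℂ be a primitive 7th root of unity and let P be a homogeneous polynomial of degree 7 in variables X_i indexed by i ∈ ℤ/7ℤ. Assume P is invariant under the three substitutions X_i ↦ X_{i+1}, X_i ↦ ζ^i·X_i, and X_i ↦ −X_{−i} (equivalently, P(z) = P(z') whenever z'(i) = z(i+1), whenever z'(i) = ζ^i z(i), and whenever z'(i) = −z(−i)). Then for every a, b ∈ ℤ/7ℤ and every y : ℤ/7ℤ → ℂ satisfying y(−i) = y(i) for all i, the polynomial P vanishes at the point z defined by z(i) = ζ^{b·i}·y(i+a). -/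
/-!
The point `z i = ζ ^ (b * i) * y (i + a)` is the image of `y` under `τ ^ b ∘ σ ^ a`, so
`P z = P y`. On a point with `y (-i) = y i` the involution `z ↦ -z ∘ Neg.neg` acts as `y ↦ -y`,
and `P` has odd degree, so `P y = P (-y) = -P y`.
-/

open MvPolynomial

namespace MvPolynomial

variable {R σ : Type*}

theorem IsHomogeneous.eval_smul [CommSemiring R] {φ : MvPolynomial σ R} {n : ℕ}
    (hφ : φ.IsHomogeneous n) (c : R) (z : σ → R) :
    eval (c • z) φ = c ^ n * eval z φ := by
  rw [eval_eq, eval_eq, Finset.mul_sum]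
  refine Finset.sum_congr rfl fun d hd => ?_
  have hdeg : d.degree = n := by
    rw [Finsupp.degree_eq_weight_one]
    exact hφ (mem_support_iff.mp hd)
  simp only [Pi.smul_apply, smul_eq_mul, mul_pow, Finset.prod_mul_distrib,
    Finset.prod_pow_eq_pow_sum, ← Finsupp.degree_apply, hdeg]
  ring

theorem IsHomogeneous.eval_eq_zero_of_odd [CommRing R] [IsAddTorsionFree R] [Neg σ]
    {φ : MvPolynomial σ R} {n : ℕ} (hφ : φ.IsHomogeneous n) (hn : Odd n)
    (hinv : ∀ z : σ → R, eval (fun i => -z (-i)) φ = eval z φ)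
    {y : σ → R} (hy : ∀ i, y (-i) = y i) : eval y φ = 0 := by
  have hneg : (fun i => -y (-i)) = (-1 : R) • y := by
    funext i
    simp [hy i]
  have := hinv y
  rw [hneg, hφ.eval_smul, hn.neg_one_pow, neg_one_mul, eq_comm] at this
  exact self_eq_neg.mp this

section ZMod

variable [CommSemiring R] {n : ℕ} {P : MvPolynomial (ZMod n) R}

theorem eval_comp_add_natCast (hshift : ∀ z : ZMod n → R, eval (fun i => z (i + 1)) P = eval z P)
    (k : ℕ) (z : ZMod n → R) : eval (fun i => z (i + k)) P = eval z P := by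
  induction k generalizing z with
  | zero => simp
  | succ k ih =>
    calc eval (fun i => z (i + (k + 1 : ℕ))) P
        = eval (fun i => (fun j => z (j + k)) (i + 1)) P := by
          congr 2; funext i; push_cast; ring_nf
      _ = eval z P := (hshift fun j => z (j + k)).trans (ih z)

theorem eval_comp_add [NeZero n]
    (hshift : ∀ z : ZMod n → R, eval (fun i => z (i + 1)) P = eval z P)
    (a : ZMod n) (z : ZMod n → R) : eval (fun i => z (i + a)) P = eval z P := by
  simpa only [ZMod.natCast_zmod_val] using eval_comp_add_natCast hshift a.val z

theorem eval_pow_mul_mul {ζ : R}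
    (hscale : ∀ z : ZMod n → R, eval (fun i => ζ ^ i.val * z i) P = eval z P)
    (k : ℕ) (z : ZMod n → R) : eval (fun i => ζ ^ (k * i.val) * z i) P = eval z P := by
  induction k generalizing z with
  | zero => simp
  | succ k ih =>
    calc eval (fun i => ζ ^ ((k + 1) * i.val) * z i) P
        = eval (fun i => ζ ^ i.val * (fun j => ζ ^ (k * j.val) * z j) i) P := by
          congr 2; funext i; ring
      _ = eval z P := (hscale fun j => ζ ^ (k * j.val) * z j).trans (ih z)

theorem eval_pow_val_mul {ζ : R} (hζ : ζ ^ n = 1)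
    (hscale : ∀ z : ZMod n → R, eval (fun i => ζ ^ i.val * z i) P = eval z P)
    (b : ZMod n) (z : ZMod n → R) : eval (fun i => ζ ^ (b * i).val * z i) P = eval z P := by
  simpa only [ZMod.val_mul, ← pow_eq_pow_mod _ hζ] using eval_pow_mul_mul hscale b.val z

end ZMod

end MvPolynomial

/-- A degree-7 homogeneous polynomial in variables indexed by `ZMod 7`,
invariant under the Heisenberg substitutions `Xᵢ ↦ Xᵢ₊₁`, `Xᵢ ↦ ζ^i Xᵢ` and the involution
`Xᵢ ↦ -X₋ᵢ`, vanishes on each of the forty-nine `P³₋`'s. -/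
theorem g7_invariant_septimic_vanishes_on_P3minus
    (ζ : ℂ) (hζ : IsPrimitiveRoot ζ 7)
    (P : MvPolynomial (ZMod 7) ℂ) (hP : P.IsHomogeneous 7)
    (hshift : ∀ z : ZMod 7 → ℂ, eval (fun i => z (i + 1)) P = eval z P)
    (hscale : ∀ z : ZMod 7 → ℂ, eval (fun i => ζ ^ i.val * z i) P = eval z P)
    (hinv : ∀ z : ZMod 7 → ℂ, eval (fun i => -z (-i)) P = eval z P) :
    ∀ (a b : ZMod 7) (y : ZMod 7 → ℂ), (∀ i, y (-i) = y i) →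
      eval (fun i => ζ ^ (b * i).val * y (i + a)) P = 0 := by
  intro a b y hy
  rw [eval_pow_val_mul hζ.pow_eq_one hscale b, eval_comp_add hshift a]
  exact hP.eval_eq_zero_of_odd (by decide) hinv hy
end

section
/- Let ζ ∈ ℂ be a primitive 7th root of unity. The space of homogeneous degree-4 polynomials in ℂ[x,y,z] that are invariant under both substitutions (x,y,z) ↦ (ζx, ζ⁴y, ζ²z) and (x,y,z) ↦ (y,z,x) is one-dimensional, spanned by the Klein quartic x³y + y³z + z³x. -/
/-!
A diagonal substitution `xᵢ ↦ ζ^{eᵢ} xᵢ` multiplies the monomial `x^d` by `ζ^{Σ dᵢ eᵢ}`, so an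
invariant polynomial only contains monomials whose weight `a + 4b + 2c` is divisible by 7. In
degree 4 these are exactly `x³y`, `y³z`, `z³x`, a single orbit of the cyclic substitution, which
therefore forces their three coefficients to agree. Hence an invariant quartic with no `x³y`
term vanishes, and it remains to subtract the right multiple of the Klein quartic.
-/

open MvPolynomial

section DiagonalSubstitution

variable {σ R : Type*}

theorem aeval_C_mul_X_monomial [CommSemiring R] (w : σ → R) (d : σ →₀ ℕ) (a : R) :
    aeval (fun i => C (w i) * X i) (monomial d a) =
      monomial d ((d.prod fun i k => w i ^ k) * a) := by
  rw [aeval_monomial, monomial_eq, C_mul, algebraMap_eq]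
  simp only [mul_pow, Finsupp.prod_mul, ← map_pow, ← map_finsuppProd]
  ring

theorem coeff_aeval_C_mul_X [CommSemiring R] (w : σ → R) (P : MvPolynomial σ R) (d : σ →₀ ℕ) :
    coeff d (aeval (fun i => C (w i) * X i) P) = (d.prod fun i k => w i ^ k) * coeff d P := by
  induction P using MvPolynomial.induction_on' with
  | monomial u a =>
    classical
    rw [aeval_C_mul_X_monomial, coeff_monomial, coeff_monomial]
    split_ifs with h
    · rw [h]
    · rw [mul_zero]
  | add p q hp hq => rw [map_add, coeff_add, hp, hq, coeff_add, mul_add]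

theorem Finsupp.prod_pow_pow_eq_pow_weight [CommMonoid R] (ζ : R) (e : σ → ℕ) (d : σ →₀ ℕ) :
    (d.prod fun i k => (ζ ^ e i) ^ k) = ζ ^ Finsupp.weight e d := by
  simp only [Finsupp.weight_apply, Finsupp.sum, Finsupp.prod, ← pow_mul,
    Finset.prod_pow_eq_pow_sum, smul_eq_mul, mul_comm]

theorem coeff_eq_zero_of_aeval_C_pow_mul_X_eq [CommRing R] [IsDomain R] {ζ : R} {n : ℕ}
    (hζ : IsPrimitiveRoot ζ n) (e : σ → ℕ) {P : MvPolynomial σ R}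
    (hP : aeval (fun i => C (ζ ^ e i) * X i) P = P) {d : σ →₀ ℕ}
    (hd : ¬ n ∣ Finsupp.weight e d) : coeff d P = 0 := by
  have hfix := congrArg (coeff d) hP
  rw [coeff_aeval_C_mul_X, Finsupp.prod_pow_pow_eq_pow_weight] at hfix
  have hne : ζ ^ Finsupp.weight e d ≠ 1 := fun h => hd ((hζ.pow_eq_one_iff_dvd _).mp h)
  by_contra h
  exact hne ((mul_eq_right₀ h).mp hfix)

end DiagonalSubstitution

theorem coeff_equivMapDomain_of_rename_eq {σ R : Type*} [CommSemiring R] (e : σ ≃ σ)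
    {P : MvPolynomial σ R} (hP : rename e P = P) (d : σ →₀ ℕ) :
    coeff (Finsupp.equivMapDomain e d) P = coeff d P := by
  rw [Finsupp.equivMapDomain_eq_mapDomain, ← coeff_rename_mapDomain e e.injective P d, hP]

theorem Finsupp.weight_fin_three (e : Fin 3 → ℕ) (d : Fin 3 →₀ ℕ) :
    Finsupp.weight e d = d 0 * e 0 + d 1 * e 1 + d 2 * e 2 := by
  simp [Finsupp.weight_apply, Finsupp.sum_fintype, Fin.sum_univ_three]

theorem Finsupp.degree_fin_three (d : Fin 3 →₀ ℕ) : d.degree = d 0 + d 1 + d 2 := by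
  simp [Finsupp.degree_eq_sum, Fin.sum_univ_three]

theorem aeval_rotate_eq_rename {R : Type*} [CommSemiring R] :
    aeval ![X 1, X 2, X 0] = (rename (finRotate 3) : MvPolynomial (Fin 3) R →ₐ[R] _) := by
  apply algHom_ext
  intro i
  fin_cases i <;> simp

section KleinQuartic

variable {R : Type*}

noncomputable def kleinQuartic [CommSemiring R] : MvPolynomial (Fin 3) R :=
  X 0 ^ 3 * X 1 + X 1 ^ 3 * X 2 + X 2 ^ 3 * X 0

noncomputable def kleinExponent : Fin 3 →₀ ℕ :=
  Finsupp.single 0 3 + Finsupp.single 1 1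

theorem isHomogeneous_kleinQuartic [CommSemiring R] :
    (kleinQuartic : MvPolynomial (Fin 3) R).IsHomogeneous 4 := by
  refine IsHomogeneous.add (IsHomogeneous.add ?_ ?_) ?_ <;>
    exact ((isHomogeneous_X R _).pow 3).mul (isHomogeneous_X R _)

theorem rename_finRotate_kleinQuartic [CommSemiring R] :
    rename (finRotate 3) (kleinQuartic : MvPolynomial (Fin 3) R) = kleinQuartic := by
  simp [kleinQuartic]
  ring

theorem aeval_kleinQuartic [CommSemiring R] {ζ : R} (hζ : ζ ^ 7 = 1) :
    aeval ![C ζ * X 0, C (ζ ^ 4) * X 1, C (ζ ^ 2) * X 2] (kleinQuartic : MvPolynomial (Fin 3) R) =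
      kleinQuartic := by
  have h : C ζ ^ 7 = (1 : MvPolynomial (Fin 3) R) := by rw [← map_pow, hζ, map_one]
  calc _ = C ζ ^ 7 * (X 0 ^ 3 * X 1) + (C ζ ^ 7) ^ 2 * (X 1 ^ 3 * X 2) +
        C ζ ^ 7 * (X 2 ^ 3 * X 0) := by
        simp [kleinQuartic]
        ring
    _ = kleinQuartic := by rw [h, kleinQuartic]; ring

theorem coeff_kleinExponent_kleinQuartic [CommSemiring R] :
    coeff kleinExponent (kleinQuartic : MvPolynomial (Fin 3) R) = 1 := by
  classical
  simp only [kleinQuartic, kleinExponent, X, monomial_pow, monomial_mul, coeff_add,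
    coeff_monomial]
  simp [Finsupp.ext_iff, Fin.forall_fin_succ, Finsupp.single_apply]

theorem eq_kleinExponent_orbit_of_dvd_weight {d : Fin 3 →₀ ℕ} (hdeg : d.degree = 4)
    (hw : 7 ∣ Finsupp.weight ![1, 4, 2] d) :
    d = kleinExponent ∨ d = Finsupp.equivMapDomain (finRotate 3) kleinExponent ∨
      d = Finsupp.equivMapDomain (finRotate 3)
        (Finsupp.equivMapDomain (finRotate 3) kleinExponent) := by
  rw [Finsupp.degree_fin_three] at hdeg
  simp only [Finsupp.weight_fin_three, Matrix.cons_val_zero, Matrix.cons_val_one,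
    Matrix.cons_val_two, Matrix.head_cons, Matrix.tail_cons, mul_one] at hw
  have h : d 0 = 3 ∧ d 1 = 1 ∧ d 2 = 0 ∨ d 0 = 0 ∧ d 1 = 3 ∧ d 2 = 1 ∨
      d 0 = 1 ∧ d 1 = 0 ∧ d 2 = 3 := by
    obtain ⟨k, hk⟩ := hw
    -- the weight is at most `4 * 4`, so it is `0`, `7` or `14`
    have hk2 : k ≤ 2 := by omega
    interval_cases k <;> omega
  rcases h with h | h | h <;> [left; (right; left); (right; right)] <;>
    ext i <;> fin_cases i <;> simp +decide [kleinExponent, h, Finsupp.single_apply]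

theorem eq_zero_of_klein_invariant [CommRing R] [IsDomain R] {ζ : R} (hζ : IsPrimitiveRoot ζ 7)
    {Q : MvPolynomial (Fin 3) R} (hH : Q.IsHomogeneous 4)
    (hD : aeval ![C ζ * X 0, C (ζ ^ 4) * X 1, C (ζ ^ 2) * X 2] Q = Q)
    (hR : rename (finRotate 3) Q = Q) (h₀ : coeff kleinExponent Q = 0) : Q = 0 := by
  have hdiag : ![C ζ * X 0, C (ζ ^ 4) * X 1, C (ζ ^ 2) * X 2] =
      fun i => C (ζ ^ ![1, 4, 2] i) * X i := by
    funext i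
    fin_cases i <;> simp
  ext d
  rw [coeff_zero]
  by_cases hdeg : d.degree = 4
  swap
  · exact hH.coeff_eq_zero hdeg
  by_cases hw : 7 ∣ Finsupp.weight ![1, 4, 2] d
  swap
  · exact coeff_eq_zero_of_aeval_C_pow_mul_X_eq hζ _ (hdiag ▸ hD) hw
  have hrot := coeff_equivMapDomain_of_rename_eq (finRotate 3) hR
  obtain rfl | rfl | rfl := eq_kleinExponent_orbit_of_dvd_weight hdeg hw
  · exact h₀
  · rw [hrot, h₀]
  · rw [hrot, hrot, h₀]

end KleinQuartic

/-- The homogeneous quartics in `ℂ[x,y,z]` invariant under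
`(x,y,z) ↦ (ζx, ζ⁴y, ζ²z)` and `(x,y,z) ↦ (y,z,x)` (with `ζ` a primitive 7th root of
unity) form the one-dimensional space spanned by the Klein quartic `x³y + y³z + z³x`. -/
theorem klein_quartic_unique_invariant
    (ζ : ℂ) (hζ : IsPrimitiveRoot ζ 7) :
    {P : MvPolynomial (Fin 3) ℂ | P.IsHomogeneous 4 ∧
        aeval ![C ζ * X 0, C (ζ ^ 4) * X 1, C (ζ ^ 2) * X 2] P = P ∧
        aeval ![X 1, X 2, X 0] P = P} =
      {P : MvPolynomial (Fin 3) ℂ |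
        ∃ c : ℂ, P = c • (X 0 ^ 3 * X 1 + X 1 ^ 3 * X 2 + X 2 ^ 3 * X 0)} := by
  ext P
  simp only [Set.mem_ofPred_eq, aeval_rotate_eq_rename]
  change _ ↔ ∃ c : ℂ, P = c • kleinQuartic
  have hK := aeval_kleinQuartic hζ.pow_eq_one
  constructor
  · rintro ⟨hH, hD, hR⟩
    refine ⟨coeff kleinExponent P, sub_eq_zero.mp (eq_zero_of_klein_invariant hζ ?_ ?_ ?_ ?_)⟩
    · rw [smul_eq_C_mul]
      exact hH.sub (isHomogeneous_kleinQuartic.C_mul _)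
    · rw [map_sub, map_smul, hD, hK]
    · rw [map_sub, map_smul, hR, rename_finRotate_kleinQuartic]
    · rw [coeff_sub, coeff_smul, coeff_kleinExponent_kleinQuartic, smul_eq_mul, mul_one, sub_self]
  · rintro ⟨c, rfl⟩
    refine ⟨?_, by rw [map_smul, hK], by rw [map_smul, rename_finRotate_kleinQuartic]⟩
    rw [smul_eq_C_mul]
    exact isHomogeneous_kleinQuartic.C_mul _
end

section
/- Let (e_k)_{k ∈ ℤ/7ℤ} be the standard basis of ℂ^{ℤ/7ℤ}. For i ∈ {0,1,2} and k ∈ ℤ/7ℤ set I_i^k = {k+i+1, k−i−1, k+3i+3, k−3i−3} ⊆ ℤ/7ℤ, and let B_i be the union over k ∈ ℤ/7ℤ of the linear spans of {e_n : n ∈ I_i^k}. Then for any permutation (i,j,k) of (0,1,2), the union over all pairs a ≠ b in ℤ/7ℤ of the linear spans of {e_a, e_{a+i+1}, e_b, e_{b+i+1}} equals B_j ∪ B_k (as subsets of ℂ^{ℤ/7ℤ}). -/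
/-- The standard basis vector `e_k` of `ℂ^{ℤ/7ℤ}`. -/
noncomputable def e (n : ZMod 7) : ZMod 7 → ℂ := Pi.single n 1

/-- The index set `I_i^k = {k+i+1, k−i−1, k+3i+3, k−3i−3} ⊆ ℤ/7ℤ`. -/
def Iset (i : ℕ) (k : ZMod 7) : Set (ZMod 7) :=
  {k + i + 1, k - i - 1, k + 3 * i + 3, k - 3 * i - 3}

/-- `B_i`, the union over `k ∈ ℤ/7ℤ` of the spans of `{e_n : n ∈ I_i^k}`. -/
noncomputable def B (i : ℕ) : Set (ZMod 7 → ℂ) :=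
  ⋃ k : ZMod 7, (Submodule.span ℂ (e '' Iset i k) : Set (ZMod 7 → ℂ))

def pairSet (i : ℕ) (a b : ZMod 7) : Set (ZMod 7) := {a, a + i + 1, b, b + i + 1}

lemma image_pair (i : ℕ) (a b : ZMod 7) :
    ({e a, e (a + i + 1), e b, e (b + i + 1)} : Set (ZMod 7 → ℂ)) = e '' pairSet i a b := by
  simp [pairSet, Set.image_insert_eq]

lemma span_sub {S T : Set (ZMod 7)} (h : S ⊆ T) :
    (Submodule.span ℂ (e '' S) : Set (ZMod 7 → ℂ)) ⊆ Submodule.span ℂ (e '' T) :=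
  fun _ hx => Submodule.span_mono (Set.image_mono h) hx

lemma main (i j k : ℕ)
    (hfwd : ∀ a b : ZMod 7, a ≠ b →
      (∃ m, pairSet i a b ⊆ Iset j m) ∨ (∃ m, pairSet i a b ⊆ Iset k m))
    (hbj : ∀ m : ZMod 7, ∃ a b : ZMod 7, a ≠ b ∧ Iset j m ⊆ pairSet i a b)
    (hbk : ∀ m : ZMod 7, ∃ a b : ZMod 7, a ≠ b ∧ Iset k m ⊆ pairSet i a b) :
    (⋃ (a : ZMod 7) (b : ZMod 7) (_ : a ≠ b),
        (Submodule.span ℂ {e a, e (a + i + 1), e b, e (b + i + 1)} :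
          Set (ZMod 7 → ℂ))) = B j ∪ B k := by
  apply Set.Subset.antisymm
  · refine Set.iUnion_subset fun a => Set.iUnion_subset fun b => Set.iUnion_subset fun hab => ?_
    rw [image_pair]
    rcases hfwd a b hab with ⟨m, hm⟩ | ⟨m, hm⟩
    · exact Set.subset_union_of_subset_left
        (Set.subset_iUnion_of_subset m (span_sub hm)) _
    · exact Set.subset_union_of_subset_right
        (Set.subset_iUnion_of_subset m (span_sub hm)) _
  · apply Set.union_subset
    · refine Set.iUnion_subset fun m => ?_
      obtain ⟨a, b, hab, hsub⟩ := hbj m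
      refine Set.subset_iUnion_of_subset a (Set.subset_iUnion_of_subset b
        (Set.subset_iUnion_of_subset hab ?_))
      rw [image_pair]
      exact span_sub hsub
    · refine Set.iUnion_subset fun m => ?_
      obtain ⟨a, b, hab, hsub⟩ := hbk m
      refine Set.subset_iUnion_of_subset a (Set.subset_iUnion_of_subset b
        (Set.subset_iUnion_of_subset hab ?_))
      rw [image_pair]
      exact span_sub hsub

set_option synthInstance.maxSize 1024 in
set_option synthInstance.maxHeartbeats 1000000 in
set_option maxHeartbeats 1000000 in
lemma hfwd012 : ∀ a b : ZMod 7, a ≠ b →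
    (∃ m, pairSet 0 a b ⊆ Iset 1 m) ∨ (∃ m, pairSet 0 a b ⊆ Iset 2 m) := by
  simp only [pairSet, Iset, Set.insert_subset_iff, Set.singleton_subset_iff,
    Set.mem_insert_iff, Set.mem_singleton_iff]
  decide

set_option synthInstance.maxSize 1024 in
set_option synthInstance.maxHeartbeats 1000000 in
set_option maxHeartbeats 1000000 in
lemma hfwd102 : ∀ a b : ZMod 7, a ≠ b →
    (∃ m, pairSet 1 a b ⊆ Iset 0 m) ∨ (∃ m, pairSet 1 a b ⊆ Iset 2 m) := by
  simp only [pairSet, Iset, Set.insert_subset_iff, Set.singleton_subset_iff,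
    Set.mem_insert_iff, Set.mem_singleton_iff]
  decide

set_option synthInstance.maxSize 1024 in
set_option synthInstance.maxHeartbeats 1000000 in
set_option maxHeartbeats 1000000 in
lemma hfwd201 : ∀ a b : ZMod 7, a ≠ b →
    (∃ m, pairSet 2 a b ⊆ Iset 0 m) ∨ (∃ m, pairSet 2 a b ⊆ Iset 1 m) := by
  simp only [pairSet, Iset, Set.insert_subset_iff, Set.singleton_subset_iff,
    Set.mem_insert_iff, Set.mem_singleton_iff]
  decide

set_option synthInstance.maxSize 1024 in
set_option synthInstance.maxHeartbeats 1000000 in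
set_option maxHeartbeats 1000000 in
lemma hback (i j : ℕ) (hi : i < 3) (hj : j < 3) (hij : i ≠ j) :
    ∀ m : ZMod 7, ∃ a b : ZMod 7, a ≠ b ∧ Iset j m ⊆ pairSet i a b := by
  interval_cases i <;> interval_cases j <;> first
    | exact absurd rfl hij
    | (simp only [pairSet, Iset, Set.insert_subset_iff, Set.singleton_subset_iff,
        Set.mem_insert_iff, Set.mem_singleton_iff]; decide)

/-- For any permutation `(i,j,k)` of `(0,1,2)`, the union of the
spans of pairs of edges of the heptagon `E_i` (the bisecant variety of `E_i`)
equals `B_j ∪ B_k`. -/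
theorem bisecant_of_heptagon_eq
    (i j k : ℕ) (hperm : [i, j, k].Perm [0, 1, 2]) :
    (⋃ (a : ZMod 7) (b : ZMod 7) (_ : a ≠ b),
        (Submodule.span ℂ {e a, e (a + i + 1), e b, e (b + i + 1)} :
          Set (ZMod 7 → ℂ)))
      = B j ∪ B k := by
  have hi : i ∈ [0, 1, 2] := hperm.subset (by simp)
  have hj : j ∈ [0, 1, 2] := hperm.subset (by simp)
  have hk : k ∈ [0, 1, 2] := hperm.subset (by simp)
  simp only [List.mem_cons, List.mem_singleton, List.not_mem_nil, or_false] at hi hj hk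
  rcases hi with rfl | rfl | rfl <;> rcases hj with rfl | rfl | rfl <;>
    rcases hk with rfl | rfl | rfl <;>
    first
      | exact absurd hperm (by decide)
      | exact main _ _ _ hfwd012 (hback _ _ (by norm_num) (by norm_num) (by norm_num))
          (hback _ _ (by norm_num) (by norm_num) (by norm_num))
      | (rw [Set.union_comm];
         exact main _ _ _ hfwd012 (hback _ _ (by norm_num) (by norm_num) (by norm_num))
          (hback _ _ (by norm_num) (by norm_num) (by norm_num)))
      | exact main _ _ _ hfwd102 (hback _ _ (by norm_num) (by norm_num) (by norm_num))
          (hback _ _ (by norm_num) (by norm_num) (by norm_num))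
      | (rw [Set.union_comm];
         exact main _ _ _ hfwd102 (hback _ _ (by norm_num) (by norm_num) (by norm_num))
          (hback _ _ (by norm_num) (by norm_num) (by norm_num)))
      | exact main _ _ _ hfwd201 (hback _ _ (by norm_num) (by norm_num) (by norm_num))
          (hback _ _ (by norm_num) (by norm_num) (by norm_num))
      | (rw [Set.union_comm];
         exact main _ _ _ hfwd201 (hback _ _ (by norm_num) (by norm_num) (by norm_num))
          (hback _ _ (by norm_num) (by norm_num) (by norm_num)))
end

section
/- Let ζ ∈ ℂ be a primitive 7th root of unity. For a, b ∈ ℤ/7ℤ let V_{a,b} ⊆ ℂ^{ℤ/7ℤ} be the subspace of all points z of the form z(i) = ζ^{b·i}·y(i+a) for some y : ℤ/7ℤ → ℂ with y(−i) = y(i) for all i. Then the forty-nine subspaces V_{a,b} together span ℂ^{ℤ/7ℤ}. -/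
/-! Only the translates with `a = 0` and `b ∈ {0, 1}` are needed. For `j ≠ -j` the even function
`δ_j + δ_{-j}` and its twist by the character `χ i = ζ ^ i.val` are independent on `{j, -j}`,
because `χ` is injective, so a combination of the two isolates `δ_j`; for `j = -j`, `δ_j` is
already even. -/

open Function Submodule

section EvenFunctions

variable {G K : Type*} [DecidableEq G]

lemma Function.Even.single_of_eq_neg [InvolutiveNeg G] [Zero K] {j : G} (hj : j = -j) (c : K) :
    (Pi.single j c : G → K).Even := by
  intro i
  simp only [Pi.single_apply, neg_eq_iff_eq_neg, ← hj]

lemma Function.Even.single_add_single_neg [InvolutiveNeg G] [AddCommMonoid K] (j : G) (c : K) :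
    (Pi.single j c + Pi.single (-j) c : G → K).Even := by
  intro i
  simp only [Pi.add_apply, Pi.single_apply, neg_eq_iff_eq_neg, neg_neg]
  exact add_comm _ _

lemma Pi.single_one_eq_smul_mul_sub [Neg G] [Field K] (χ : G → K) {j : G}
    (hχ : χ j ≠ χ (-j)) :
    (Pi.single j 1 : G → K) = (χ j - χ (-j))⁻¹ •
      (χ * (Pi.single j 1 + Pi.single (-j) 1) - χ (-j) • (Pi.single j 1 + Pi.single (-j) 1)) := by
  have hd : χ j - χ (-j) ≠ 0 := sub_ne_zero.2 hχ
  have hj : j ≠ -j := fun h => hχ (congrArg χ h)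
  funext i
  by_cases hij : i = j
  · subst hij
    simp [hj, hd]
  · by_cases hij' : i = -j
    · subst hij'
      simp [hij]
    · simp [hij, hij']

theorem span_even_union_mul_even [InvolutiveNeg G] [Finite G] [Field K] (χ : G → K)
    (hχ : Injective χ) :
    span K ({y : G → K | y.Even} ∪ {z | ∃ y : G → K, y.Even ∧ z = χ * y}) = ⊤ := by
  rw [eq_top_iff, ← (Pi.basisFun K G).span_eq, span_le]
  rintro _ ⟨j, rfl⟩
  rw [Pi.basisFun_apply]
  by_cases hj : j = -j
  · exact subset_span (Or.inl (Even.single_of_eq_neg hj 1))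
  · have hy := Even.single_add_single_neg j (1 : K)
    rw [Pi.single_one_eq_smul_mul_sub χ (hχ.ne hj)]
    exact smul_mem _ _ (sub_mem (subset_span (Or.inr ⟨_, hy, rfl⟩))
      (smul_mem _ _ (subset_span (Or.inl hy))))

end EvenFunctions

lemma IsPrimitiveRoot.injective_pow_val {M : Type*} [CommMonoid M] {n : ℕ} [NeZero n] {ζ : M}
    (hζ : IsPrimitiveRoot ζ n) :
    Injective fun i : ZMod n => ζ ^ i.val :=
  fun i j h => ZMod.val_injective n (hζ.pow_inj (ZMod.val_lt i) (ZMod.val_lt j) h)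

/-- The forty-nine subspaces `V_{a,b}` (Heisenberg translates of the
symmetric subspace `{y : y(−i) = y(i)}`) together span `ℂ^{ℤ/7ℤ}`. -/
theorem heisenberg_translates_span
    (ζ : ℂ) (hζ : IsPrimitiveRoot ζ 7) :
    Submodule.span ℂ
        {z : ZMod 7 → ℂ | ∃ a b : ZMod 7, ∃ y : ZMod 7 → ℂ,
          (∀ i, y (-i) = y i) ∧ ∀ i, z i = ζ ^ (b * i).val * y (i + a)} = ⊤ := by
  refine top_unique ((span_even_union_mul_even _ hζ.injective_pow_val).ge.trans (span_mono ?_))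
  rintro z (hz | ⟨y, hy, rfl⟩)
  · exact ⟨0, 0, z, hz, fun i => by simp⟩
  · exact ⟨0, 1, y, hy, fun i => by simp⟩
end

section
/- Let ζ ∈ ℂ be a primitive 7th root of unity, and let σ, τ : ℂ^{ℤ/7ℤ} → ℂ^{ℤ/7ℤ} be the linear maps defined by (σz)(i) = z(i−1) and (τz)(i) = ζ^i·z(i). Then for every nonzero z ∈ ℂ^{ℤ/7ℤ}, the set of one-dimensional subspaces {ℂ·(σ^a τ^b z) : a, b ∈ ℤ/7ℤ} has cardinality at least 7. -/
/-- The cyclic shift `(σz)(i) = z(i−1)` on `ℂ^{ℤ/7ℤ}`. -/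
def heisenbergShift : (ZMod 7 → ℂ) → (ZMod 7 → ℂ) := fun z i => z (i - 1)

/-- The scaling `(τz)(i) = ζ^i z(i)` on `ℂ^{ℤ/7ℤ}`. -/
def heisenbergScale (ζ : ℂ) : (ZMod 7 → ℂ) → (ZMod 7 → ℂ) := fun z i => ζ ^ i.val * z i

lemma heisenbergShift_iter : ∀ (n : ℕ) (z : ZMod 7 → ℂ) (i : ZMod 7),
    heisenbergShift^[n] z i = z (i - (n : ZMod 7))
  | 0, z, i => by simp
  | n + 1, z, i => by
    rw [Function.iterate_succ_apply, heisenbergShift_iter n]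
    show z (i - (n : ZMod 7) - 1) = _
    congr 1
    push_cast
    ring

lemma heisenbergScale_iter (ζ : ℂ) : ∀ (n : ℕ) (z : ZMod 7 → ℂ) (i : ZMod 7),
    (heisenbergScale ζ)^[n] z i = ζ ^ (i.val * n) * z i
  | 0, z, i => by simp
  | n + 1, z, i => by
    rw [Function.iterate_succ_apply, heisenbergScale_iter ζ n]
    show ζ ^ (i.val * n) * (ζ ^ i.val * z i) = _
    rw [← mul_assoc, ← pow_add, Nat.mul_succ]

/-- For any nonzero `z ∈ ℂ^{ℤ/7ℤ}`, the Heisenberg orbit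
`{ℂ·(σ^a τ^b z) : a, b ∈ ℤ/7ℤ}` of the line through `z` has at least `7` elements. -/
theorem heisenberg_orbit_card_ge_seven
    (ζ : ℂ) (hζ : IsPrimitiveRoot ζ 7) (z : ZMod 7 → ℂ) (hz : z ≠ 0) :
    7 ≤ {W : Submodule ℂ (ZMod 7 → ℂ) | ∃ a b : ZMod 7,
        W = Submodule.span ℂ
          {heisenbergShift^[a.val] ((heisenbergScale ζ)^[b.val] z)}}.ncard := by
  set S : Set (Submodule ℂ (ZMod 7 → ℂ)) := {W : Submodule ℂ (ZMod 7 → ℂ) | ∃ a b : ZMod 7,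
        W = Submodule.span ℂ
          {heisenbergShift^[a.val] ((heisenbergScale ζ)^[b.val] z)}} with hS
  have hSfin : S.Finite := by
    have hsub : S ⊆ Set.range (fun p : ZMod 7 × ZMod 7 =>
        Submodule.span ℂ {heisenbergShift^[p.1.val] ((heisenbergScale ζ)^[p.2.val] z)}) := by
      rintro W ⟨a, b, rfl⟩; exact ⟨(a, b), rfl⟩
    exact (Set.finite_range _).subset hsub
  have count : ∀ g : ZMod 7 → Submodule ℂ (ZMod 7 → ℂ),
      Function.Injective g → Set.range g ⊆ S → 7 ≤ S.ncard := by
    intro g hg hsub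
    have h1 : (Set.range g).ncard = 7 := by
      rw [← Set.image_univ, Set.ncard_image_of_injective _ hg, Set.ncard_univ, Nat.card_zmod]
    calc (7 : ℕ) = (Set.range g).ncard := h1.symm
      _ ≤ S.ncard := Set.ncard_le_ncard hsub hSfin
  have span_eq_scalar : ∀ x y : ZMod 7 → ℂ, x ≠ 0 →
      Submodule.span ℂ ({x} : Set (ZMod 7 → ℂ)) = Submodule.span ℂ {y} →
      ∃ c : ℂ, c ≠ 0 ∧ x = c • y := by
    intro x y hx hxy
    have hmem : x ∈ Submodule.span ℂ ({y} : Set (ZMod 7 → ℂ)) :=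
      hxy ▸ Submodule.mem_span_singleton_self x
    obtain ⟨c, hc⟩ := Submodule.mem_span_singleton.mp hmem
    refine ⟨c, ?_, hc.symm⟩
    rintro rfl
    rw [zero_smul] at hc
    exact hx hc.symm
  haveI : Fact (Nat.Prime 7) := ⟨by norm_num⟩
  haveI : Fact ((1:ℕ) < 7) := ⟨by norm_num⟩
  obtain ⟨j0, hj0⟩ := Function.ne_iff.mp hz
  have hj0 : z j0 ≠ 0 := hj0
  have hζ0 : ζ ≠ 0 := hζ.ne_zero (by norm_num)
  have hshift_ne : ∀ n : ℕ, heisenbergShift^[n] z ≠ 0 := by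
    intro n h
    apply hj0
    have h' := congrFun h (j0 + (n : ZMod 7))
    rwa [heisenbergShift_iter, add_sub_cancel_right, Pi.zero_apply] at h'
  have hscale_ne : ∀ n : ℕ, (heisenbergScale ζ)^[n] z ≠ 0 := by
    intro n h
    apply hj0
    have h' := congrFun h j0
    rw [heisenbergScale_iter, Pi.zero_apply] at h'
    exact (mul_eq_zero.mp h').resolve_left (pow_ne_zero _ hζ0)
  by_cases hP : Function.Injective
      (fun a : ZMod 7 => Submodule.span ℂ ({heisenbergShift^[a.val] z} : Set (ZMod 7 → ℂ)))
  · apply count _ hP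
    rintro W ⟨a, rfl⟩
    refine ⟨a, 0, ?_⟩
    simp
  · rw [Function.not_injective_iff] at hP
    obtain ⟨a, a', heq, hne⟩ := hP
    obtain ⟨c, hc0, hcz⟩ := span_eq_scalar _ _ (hshift_ne a.val) heq
    set d : ZMod 7 := a - a' with hdd
    have hd : d ≠ 0 := sub_ne_zero_of_ne hne
    have key : ∀ j : ZMod 7, z j = c * z (j + d) := by
      intro j
      have h' := congrFun hcz (j + a)
      rw [heisenbergShift_iter, Pi.smul_apply, smul_eq_mul, heisenbergShift_iter] at h'
      have hca : ((a.val : ℕ) : ZMod 7) = a := by simp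
      have hca' : ((a'.val : ℕ) : ZMod 7) = a' := by simp
      rw [hca, hca', add_sub_cancel_right] at h'
      rw [h']
      congr 2
      rw [hdd]; ring
    have step : ∀ j : ZMod 7, z j ≠ 0 → z (j + d) ≠ 0 := by
      intro j hj h0
      exact hj (by rw [key j, h0, mul_zero])
    have iter : ∀ n : ℕ, z (j0 + (n : ZMod 7) * d) ≠ 0 := by
      intro n
      induction n with
      | zero => simpa using hj0
      | succ n ih =>
        have h' := step _ ih
        have he : j0 + ((n + 1 : ℕ) : ZMod 7) * d = j0 + (n : ZMod 7) * d + d := by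
          push_cast; ring
        rw [he]
        exact h'
    have allnz : ∀ j : ZMod 7, z j ≠ 0 := by
      intro j
      have hj : j = j0 + ((((j - j0) * d⁻¹).val : ℕ) : ZMod 7) * d := by
        have hcast : ((((j - j0) * d⁻¹).val : ℕ) : ZMod 7) = (j - j0) * d⁻¹ := by simp
        rw [hcast, mul_assoc, inv_mul_cancel₀ hd, mul_one]
        ring
      rw [hj]
      exact iter _
    have hQ : Function.Injective
        (fun b : ZMod 7 => Submodule.span ℂ ({(heisenbergScale ζ)^[b.val] z} : Set (ZMod 7 → ℂ))) := by
      intro b b' heq'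
      obtain ⟨c', hc'0, hcz'⟩ := span_eq_scalar _ _ (hscale_ne b.val) heq'
      have h0 := congrFun hcz' 0
      have h1 := congrFun hcz' 1
      rw [heisenbergScale_iter, Pi.smul_apply, smul_eq_mul, heisenbergScale_iter] at h0 h1
      rw [ZMod.val_zero] at h0
      simp only [zero_mul, pow_zero, one_mul] at h0
      have hc'1 : c' = 1 := mul_right_cancel₀ (allnz 0) (by rw [one_mul]; exact h0.symm)
      rw [hc'1, one_mul, ZMod.val_one, one_mul, one_mul] at h1
      have hpow : ζ ^ b.val = ζ ^ b'.val := mul_right_cancel₀ (allnz 1) h1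
      have := hζ.pow_inj (ZMod.val_lt b) (ZMod.val_lt b') hpow
      exact ZMod.val_injective 7 this
    apply count _ hQ
    rintro W ⟨b, rfl⟩
    refine ⟨0, b, ?_⟩
    simp
end
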